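/- Let U_1, ..., U_d be i.i.d. Beta(a, b) random variables and W an independent Gamma(a+b, β) random variable, and set Y_i = W·U_i. Then for all i ≠ j, the correlation Corr(Y_i, Y_j) = a/(a+b). -/

import Mathlib

open MeasureTheory ProbabilityTheory

/-- The density of the Beta(a, b) distribution on (0,1). -/
noncomputable def betaPDFReal (a b u : ℝ) : ℝ :=
  if 0 < u ∧ u < 1 then
    Real.Gamma (a + b) / (Real.Gamma a * Real.Gamma b) * u ^ (a - 1) * (1 - u) ^ (b - 1)
  else 0

/-- The Beta(a, b) measure on ℝ. -/
noncomputable def betaMeasure (a b : ℝ) : Measure ℝ :=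
  volume.withDensity fun u => ENNReal.ofReal (_root_.betaPDFReal a b u)

/-!
Write `m₁, m₂` for the first two moments of `W` and `p₁, p₂` for those of each `Uᵢ`.
Independence gives `E[YᵢYⱼ] = m₂ p₁²`, `E[Yᵢ] = m₁ p₁` and `Var Yᵢ = m₂ p₂ - m₁² p₁²`.
The moments come from the shape recurrences of the densities,
`x · f_{Gamma(s, β)}(x) = (s / β) · f_{Gamma(s + 1, β)}(x)` and
`x · f_{Beta(a, b)}(x) = a / (a + b) · f_{Beta(a + 1, b)}(x)`, which give
`m₁ = (a + b) / β`, `m₂ = (a + b)(a + b + 1) / β²`, `p₁ = a / (a + b)` and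
`p₂ = a (a + 1) / ((a + b)(a + b + 1))`. Hence the covariance is `a² / ((a + b) β²)`,
the variance is `a / β²`, and their ratio is `a / (a + b)`.
-/

open Real

section Tilting

variable {α : Type*} [MeasurableSpace α] {μ : Measure α} {f g φ : α → ℝ} {c : ℝ}

lemma integrable_of_lintegral_ofReal_eq_one (hg : Measurable g) (hg0 : ∀ x, 0 ≤ g x)
    (hg1 : ∫⁻ x, ENNReal.ofReal (g x) ∂μ = 1) : Integrable g μ := by
  refine ⟨hg.aestronglyMeasurable, ?_⟩
  rw [hasFiniteIntegral_iff_ofReal (ae_of_all _ hg0), hg1]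
  exact ENNReal.one_lt_top

lemma integral_eq_one_of_lintegral_ofReal_eq_one (hg : Measurable g) (hg0 : ∀ x, 0 ≤ g x)
    (hg1 : ∫⁻ x, ENNReal.ofReal (g x) ∂μ = 1) : ∫ x, g x ∂μ = 1 := by
  rw [integral_eq_lintegral_of_nonneg_ae (ae_of_all _ hg0) hg.aestronglyMeasurable, hg1,
    ENNReal.toReal_one]

lemma integral_withDensity_ofReal_of_mul_eq (hf : Measurable f) (hf0 : ∀ x, 0 ≤ f x)
    (hg : Measurable g) (hg0 : ∀ x, 0 ≤ g x) (hg1 : ∫⁻ x, ENNReal.ofReal (g x) ∂μ = 1)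
    (h : ∀ x, φ x * f x = c * g x) :
    ∫ x, φ x ∂(μ.withDensity fun x => ENNReal.ofReal (f x)) = c := by
  rw [integral_withDensity_eq_integral_toReal_smul hf.ennreal_ofReal
    (ae_of_all _ fun _ => ENNReal.ofReal_lt_top)]
  simp_rw [ENNReal.toReal_ofReal (hf0 _), smul_eq_mul, mul_comm (f _), h, integral_const_mul,
    integral_eq_one_of_lintegral_ofReal_eq_one hg hg0 hg1, mul_one]

lemma integrable_withDensity_ofReal_of_mul_eq (hf : Measurable f) (hf0 : ∀ x, 0 ≤ f x)
    (hg : Measurable g) (hg0 : ∀ x, 0 ≤ g x) (hg1 : ∫⁻ x, ENNReal.ofReal (g x) ∂μ = 1)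
    (h : ∀ x, φ x * f x = c * g x) :
    Integrable φ (μ.withDensity fun x => ENNReal.ofReal (f x)) := by
  rw [integrable_withDensity_iff_integrable_smul' hf.ennreal_ofReal
    (ae_of_all _ fun _ => ENNReal.ofReal_lt_top)]
  simp_rw [ENNReal.toReal_ofReal (hf0 _), smul_eq_mul, mul_comm (f _), h]
  exact (integrable_of_lintegral_ofReal_eq_one hg hg0 hg1).const_mul c

end Tilting

namespace ProbabilityTheory

section Moments

variable {a b r : ℝ}

lemma mul_gammaPDFReal (ha : 0 < a) (hr : r ≠ 0) (x : ℝ) :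
    x * gammaPDFReal a r x = a / r * gammaPDFReal (a + 1) r x := by
  unfold gammaPDFReal
  split_ifs with hx
  · have := Gamma_pos_of_pos ha
    rw [Gamma_add_one ha.ne', rpow_add_one hr, add_sub_cancel_right]
    rcases hx.eq_or_lt with rfl | hx
    · simp [zero_rpow ha.ne']
    · rw [rpow_sub_one hx.ne']
      field_simp
  · simp

lemma sq_mul_gammaPDFReal (ha : 0 < a) (hr : r ≠ 0) (x : ℝ) :
    x ^ 2 * gammaPDFReal a r x = a * (a + 1) / r ^ 2 * gammaPDFReal (a + 2) r x := by
  rw [sq, mul_assoc, mul_gammaPDFReal ha hr, mul_left_comm, mul_gammaPDFReal (by linarith) hr,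
    show a + 1 + 1 = a + 2 by ring]
  field_simp

lemma memLp_id_gammaMeasure (ha : 0 < a) (hr : 0 < r) : MemLp id 2 (gammaMeasure a r) :=
  (memLp_two_iff_integrable_sq aestronglyMeasurable_id).2 <|
    integrable_withDensity_ofReal_of_mul_eq (measurable_gammaPDFReal a r)
      (gammaPDFReal_nonneg ha hr) (measurable_gammaPDFReal _ r)
      (gammaPDFReal_nonneg (by linarith) hr)
      (lintegral_gammaPDF_eq_one (by linarith) hr) (sq_mul_gammaPDFReal ha hr.ne')

lemma integral_id_gammaMeasure (ha : 0 < a) (hr : 0 < r) :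
    ∫ x, x ∂gammaMeasure a r = a / r :=
  integral_withDensity_ofReal_of_mul_eq (measurable_gammaPDFReal a r) (gammaPDFReal_nonneg ha hr)
    (measurable_gammaPDFReal _ r) (gammaPDFReal_nonneg (by linarith) hr)
    (lintegral_gammaPDF_eq_one (by linarith) hr) (mul_gammaPDFReal ha hr.ne')

lemma integral_sq_gammaMeasure (ha : 0 < a) (hr : 0 < r) :
    ∫ x, x ^ 2 ∂gammaMeasure a r = a * (a + 1) / r ^ 2 :=
  integral_withDensity_ofReal_of_mul_eq (measurable_gammaPDFReal a r) (gammaPDFReal_nonneg ha hr)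
    (measurable_gammaPDFReal _ r) (gammaPDFReal_nonneg (by linarith) hr)
    (lintegral_gammaPDF_eq_one (by linarith) hr) (sq_mul_gammaPDFReal ha hr.ne')

lemma betaPDFReal_nonneg (ha : 0 < a) (hb : 0 < b) (x : ℝ) : 0 ≤ betaPDFReal a b x := by
  by_cases hx : 0 < x ∧ x < 1
  · exact (betaPDFReal_pos hx.1 hx.2 ha hb).le
  · simp [betaPDFReal, hx]

lemma beta_add_one_left (ha : 0 < a) (hb : 0 < b) : beta (a + 1) b = a / (a + b) * beta a b := by
  have := Gamma_pos_of_pos (add_pos ha hb)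
  rw [beta, beta, add_right_comm, Gamma_add_one ha.ne', Gamma_add_one (by positivity)]
  field_simp

lemma mul_betaPDFReal (ha : 0 < a) (hb : 0 < b) (x : ℝ) :
    x * betaPDFReal a b x = a / (a + b) * betaPDFReal (a + 1) b x := by
  unfold betaPDFReal
  split_ifs with hx
  · have := beta_pos ha hb
    have := hx.1.ne'
    rw [beta_add_one_left ha hb, add_sub_cancel_right, rpow_sub_one hx.1.ne']
    field_simp
  · simp

lemma sq_mul_betaPDFReal (ha : 0 < a) (hb : 0 < b) (x : ℝ) :
    x ^ 2 * betaPDFReal a b x =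
      a * (a + 1) / ((a + b) * (a + b + 1)) * betaPDFReal (a + 2) b x := by
  rw [sq, mul_assoc, mul_betaPDFReal ha hb, mul_left_comm, mul_betaPDFReal (by linarith) hb,
    show a + 1 + 1 = a + 2 by ring, show a + 1 + b = a + b + 1 by ring]
  field_simp

lemma memLp_id_betaMeasure (ha : 0 < a) (hb : 0 < b) : MemLp id 2 (betaMeasure a b) :=
  (memLp_two_iff_integrable_sq aestronglyMeasurable_id).2 <|
    integrable_withDensity_ofReal_of_mul_eq (measurable_betaPDFReal a b)
      (betaPDFReal_nonneg ha hb) (measurable_betaPDFReal _ b)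
      (betaPDFReal_nonneg (by linarith) hb)
      (lintegral_betaPDF_eq_one (by linarith) hb) (sq_mul_betaPDFReal ha hb)

lemma integral_id_betaMeasure (ha : 0 < a) (hb : 0 < b) :
    ∫ x, x ∂betaMeasure a b = a / (a + b) :=
  integral_withDensity_ofReal_of_mul_eq (measurable_betaPDFReal a b) (betaPDFReal_nonneg ha hb)
    (measurable_betaPDFReal _ b) (betaPDFReal_nonneg (by linarith) hb)
    (lintegral_betaPDF_eq_one (by linarith) hb) (mul_betaPDFReal ha hb)

lemma integral_sq_betaMeasure (ha : 0 < a) (hb : 0 < b) :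
    ∫ x, x ^ 2 ∂betaMeasure a b = a * (a + 1) / ((a + b) * (a + b + 1)) :=
  integral_withDensity_ofReal_of_mul_eq (measurable_betaPDFReal a b) (betaPDFReal_nonneg ha hb)
    (measurable_betaPDFReal _ b) (betaPDFReal_nonneg (by linarith) hb)
    (lintegral_betaPDF_eq_one (by linarith) hb) (sq_mul_betaPDFReal ha hb)

end Moments

section Independence

variable {Ω : Type*} [MeasurableSpace Ω] {μ : Measure Ω} {W U V : Ω → ℝ}

lemma integral_mul_mul_mul_of_indepFun (hW : AEMeasurable W μ) (hU : AEStronglyMeasurable U μ)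
    (hV : AEStronglyMeasurable V μ) (hWUV : IndepFun W (fun ω => (U ω, V ω)) μ)
    (hUV : IndepFun U V μ) :
    ∫ ω, W ω * U ω * (W ω * V ω) ∂μ = (∫ ω, W ω ^ 2 ∂μ) * μ[U] * μ[V] := by
  calc ∫ ω, W ω * U ω * (W ω * V ω) ∂μ = ∫ ω, W ω ^ 2 * (U ω * V ω) ∂μ := by
        congr with ω; ring
    _ = (∫ ω, W ω ^ 2 ∂μ) * ∫ ω, U ω * V ω ∂μ :=
        hWUV.integral_fun_comp_mul_comp (f := fun w => w ^ 2) (g := fun p => p.1 * p.2) hW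
          (hU.aemeasurable.prodMk hV.aemeasurable) (by fun_prop) (by fun_prop)
    _ = (∫ ω, W ω ^ 2 ∂μ) * μ[U] * μ[V] := by
        rw [hUV.integral_fun_mul_eq_mul_integral hU hV, mul_assoc]

lemma IndepFun.variance_fun_mul [IsProbabilityMeasure μ] (h : IndepFun W U μ) (hW : MemLp W 2 μ)
    (hU : MemLp U 2 μ) :
    Var[fun ω => W ω * U ω; μ] =
      (∫ ω, W ω ^ 2 ∂μ) * (∫ ω, U ω ^ 2 ∂μ) - (μ[W] * μ[U]) ^ 2 := by
  have hsq : IndepFun (fun ω => W ω ^ 2) (fun ω => U ω ^ 2) μ :=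
    h.comp (measurable_id.pow_const 2) (measurable_id.pow_const 2)
  have hmem : MemLp (fun ω => W ω * U ω) 2 μ := by
    refine (memLp_two_iff_integrable_sq (hW.1.mul hU.1)).2 ?_
    simp only [Pi.mul_apply, mul_pow]
    exact hsq.integrable_mul hW.integrable_sq hU.integrable_sq
  rw [variance_eq_sub hmem, h.integral_fun_mul_eq_mul_integral hW.1 hU.1]
  congr 1
  simp only [Pi.pow_apply, mul_pow]
  exact hsq.integral_fun_mul_eq_mul_integral (hW.1.pow 2) (hU.1.pow 2)

lemma corr_mul_mul_of_indepFun [IsProbabilityMeasure μ] (hW : MemLp W 2 μ) (hU : MemLp U 2 μ)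
    (hWUV : IndepFun W (fun ω => (U ω, V ω)) μ) (hUV : IndepFun U V μ)
    (hUV_law : IdentDistrib U V μ μ) :
    (∫ ω, W ω * U ω * (W ω * V ω) ∂μ - μ[fun ω => W ω * U ω] * μ[fun ω => W ω * V ω]) /
        (√Var[fun ω => W ω * U ω; μ] * √Var[fun ω => W ω * V ω; μ]) =
      μ[U] ^ 2 * (∫ ω, W ω ^ 2 ∂μ - μ[W] ^ 2) /
        ((∫ ω, W ω ^ 2 ∂μ) * (∫ ω, U ω ^ 2 ∂μ) - (μ[W] * μ[U]) ^ 2) := by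
  have hV : MemLp V 2 μ := hUV_law.memLp_iff.1 hU
  have hWU : IndepFun W U μ := hWUV.comp measurable_id measurable_fst
  have hWV : IndepFun W V μ := hWUV.comp measurable_id measurable_snd
  have hEV : μ[V] = μ[U] := hUV_law.integral_eq.symm
  have hEV2 : ∫ ω, V ω ^ 2 ∂μ = ∫ ω, U ω ^ 2 ∂μ :=
    (hUV_law.comp (measurable_id.pow_const 2)).integral_eq.symm
  have hvar : Var[fun ω => W ω * V ω; μ] = Var[fun ω => W ω * U ω; μ] := by
    rw [hWU.variance_fun_mul hW hU, hWV.variance_fun_mul hW hV, hEV, hEV2]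
  rw [hvar, mul_self_sqrt (variance_nonneg _ _), hWU.variance_fun_mul hW hU,
    integral_mul_mul_mul_of_indepFun hW.1.aemeasurable hU.1 hV.1 hWUV hUV,
    hWU.integral_fun_mul_eq_mul_integral hW.1 hU.1,
    hWV.integral_fun_mul_eq_mul_integral hW.1 hV.1, hEV]
  ring

end Independence

end ProbabilityTheory

lemma betaMeasure_eq_probabilityTheory_betaMeasure (a b : ℝ) :
    _root_.betaMeasure a b = ProbabilityTheory.betaMeasure a b := by
  have : _root_.betaPDFReal a b = ProbabilityTheory.betaPDFReal a b := by
    ext u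
    simp only [_root_.betaPDFReal, ProbabilityTheory.betaPDFReal, beta, one_div_div]
  rw [_root_.betaMeasure, this]
  rfl

theorem multivariate_gamma_corr_general {Ω : Type*} [MeasurableSpace Ω]
    (μ : Measure Ω)
    (d : ℕ) (a b β : ℝ) (ha : 0 < a) (hb : 0 < b) (hβ : 0 < β)
    (U : Fin d → Ω → ℝ) (W : Ω → ℝ)
    (hUm : ∀ i, Measurable (U i)) (hWm : Measurable W)
    (hU : ∀ i, μ.map (U i) = _root_.betaMeasure a b)
    (hW : μ.map W = gammaMeasure (a + b) β)
    (hind : iIndepFun (Fin.cons W U : Fin (d + 1) → Ω → ℝ) μ)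
    (Y : Fin d → Ω → ℝ) (hY : ∀ i ω, Y i ω = W ω * U i ω) :
    ∀ i j : Fin d, i ≠ j →
      (μ[fun ω => Y i ω * Y j ω] - μ[Y i] * μ[Y j]) /
          (Real.sqrt (variance (Y i) μ) * Real.sqrt (variance (Y j) μ)) =
        a / (a + b) := by
  intro i j hij
  have := hind.isProbabilityMeasure
  obtain rfl : Y = fun k ω => W ω * U k ω := funext fun k => funext (hY k)
  beta_reduce
  have hUU : IndepFun (U i) (U j) μ := by
    simpa using hind.indepFun (Fin.succ_injective _ |>.ne hij)
  have hWUU : IndepFun W (fun ω => (U i ω, U j ω)) μ := by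
    simpa using (hind.indepFun_prodMk (Fin.cases hWm hUm) i.succ j.succ 0 (Fin.succ_ne_zero i)
      (Fin.succ_ne_zero j)).symm
  have hWlaw : IdentDistrib W id μ (gammaMeasure (a + b) β) :=
    ⟨hWm.aemeasurable, aemeasurable_id, by rw [hW, Measure.map_id]⟩
  have hUlaw k : IdentDistrib (U k) id μ (ProbabilityTheory.betaMeasure a b) :=
    ⟨(hUm k).aemeasurable, aemeasurable_id,
      by rw [hU k, betaMeasure_eq_probabilityTheory_betaMeasure, Measure.map_id]⟩
  have hEW : μ[W] = (a + b) / β :=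
    hWlaw.integral_eq.trans (integral_id_gammaMeasure (by positivity) hβ)
  have hEW2 : ∫ ω, W ω ^ 2 ∂μ = (a + b) * (a + b + 1) / β ^ 2 :=
    (hWlaw.comp (measurable_id.pow_const 2)).integral_eq.trans
      (integral_sq_gammaMeasure (by positivity) hβ)
  have hEU : μ[U i] = a / (a + b) := (hUlaw i).integral_eq.trans (integral_id_betaMeasure ha hb)
  have hEU2 : ∫ ω, U i ω ^ 2 ∂μ = a * (a + 1) / ((a + b) * (a + b + 1)) :=
    ((hUlaw i).comp (measurable_id.pow_const 2)).integral_eq.trans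
      (integral_sq_betaMeasure ha hb)
  rw [corr_mul_mul_of_indepFun (hWlaw.memLp_iff.2 (memLp_id_gammaMeasure (by positivity) hβ))
    ((hUlaw i).memLp_iff.2 (memLp_id_betaMeasure ha hb)) hWUU hUU ((hUlaw i).trans (hUlaw j).symm),
    hEW, hEW2, hEU, hEU2]
  field_simp
  ring

/-- For the multivariate gamma vector `Y_i = W·U_i` with `U_1,...,U_d` i.i.d. Beta(a,b)
and `W ~ Gamma(a+b, β)` independent of them, `Corr(Y_i, Y_j) = a/(a+b)` for `i ≠ j`. -/
theorem multivariate_gamma_corr {Ω : Type*} [MeasurableSpace Ω]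
    (μ : Measure Ω) [IsProbabilityMeasure μ]
    (d : ℕ) (a b β : ℝ) (ha : 0 < a) (hb : 0 < b) (hβ : 0 < β)
    (U : Fin d → Ω → ℝ) (W : Ω → ℝ)
    (hUm : ∀ i, Measurable (U i)) (hWm : Measurable W)
    (hU : ∀ i, μ.map (U i) = _root_.betaMeasure a b)
    (hW : μ.map W = gammaMeasure (a + b) β)
    (hind : iIndepFun (Fin.cons W U : Fin (d + 1) → Ω → ℝ) μ)
    (Y : Fin d → Ω → ℝ) (hY : ∀ i ω, Y i ω = W ω * U i ω) :
    ∀ i j : Fin d, i ≠ j →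
      (μ[fun ω => Y i ω * Y j ω] - μ[Y i] * μ[Y j]) /
          (Real.sqrt (variance (Y i) μ) * Real.sqrt (variance (Y j) μ)) =
        a / (a + b) :=
  multivariate_gamma_corr_general μ d a b β ha hb hβ U W hUm hWm hU hW hind Y hY
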